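/- Block diagonalization of multi-channel circulant covariance: for z̄ ∈ ℂ^{C×n}, circ(z̄)·circ(z̄)* = (I_C ⊗ Fₙ*) · P · D(z̄) · P* · (I_C ⊗ Fₙ), where D(z̄) is block diagonal with p-th C×C block equal to v(p)v(p)* for v(p) = DFT(z̄)(p) ∈ ℂ^C (the vector of p-th DFT coefficients over the channels), P is a suitable permutation matrix, and Fₙ is the unitary DFT matrix. -/

import Mathlib

open Matrix BigOperators Kronecker

/-- The normalized DFT matrix, `(Fₙ)_{p,t} = exp(-2πi p t / n) / √n`. -/
noncomputable def dftMatrix (n : ℕ) : Matrix (ZMod n) (ZMod n) ℂ :=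
  Matrix.of fun p t =>
    Complex.exp (-2 * Real.pi * Complex.I * (p.val : ℂ) * (t.val : ℂ) / (n : ℂ)) /
      (Real.sqrt n : ℂ)

/-- The `nC × n` vertical stack of the circulant matrices of the channels of a
multi-channel signal `z̄ : Fin C → ZMod n → ℂ`. -/
def circStack {C n : ℕ} (z : Fin C → ZMod n → ℂ) :
    Matrix (Fin C × ZMod n) (ZMod n) ℂ :=
  Matrix.of fun ci j => z ci.1 (ci.2 - j)

/-- The permutation matrix reordering indices from (channel, frequency) to
(frequency, channel). -/
def permCF (C n : ℕ) : Matrix (Fin C × ZMod n) (ZMod n × Fin C) ℂ :=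
  Matrix.of fun ci pc => if ci.1 = pc.2 ∧ ci.2 = pc.1 then 1 else 0

/-- The DFT coefficients of each channel: `v(p)(c) = ∑ t, z̄[c](t) ω^{p t}`. -/
noncomputable def dftCoeff {C n : ℕ} [NeZero n] (z : Fin C → ZMod n → ℂ)
    (p : ZMod n) (c : Fin C) : ℂ :=
  ∑ t : ZMod n,
    z c t * Complex.exp (-2 * Real.pi * Complex.I * (p.val : ℂ) * (t.val : ℂ) / (n : ℂ))

/-!
Each channel's circulant matrix is diagonalised by the unitary DFT matrix,
`circ(x) = Fᴴ diag(𝓕 x) F`, so `circ(z̄) = (I ⊗ Fᴴ) Λ F` where `Λ` stacks the diagonal matrices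
`diag(𝓕 z̄[c])`. Unitarity of `F` turns `circ(z̄) circ(z̄)ᴴ` into `(I ⊗ Fᴴ) Λ Λᴴ (I ⊗ F)`, and
`Λ Λᴴ` is `D(z̄)` with the (frequency, channel) indices swapped, i.e. `P D(z̄) Pᴴ`.
-/

open scoped ZMod

namespace Matrix

variable {ι m m' k l R : Type*}

def stack (B : ι → Matrix m k R) : Matrix (ι × m) k R :=
  of fun ci j => B ci.1 ci.2 j

@[simp]
lemma stack_apply (B : ι → Matrix m k R) (c : ι) (i : m) (j : k) :
    stack B (c, i) j = B c i j :=
  rfl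

lemma stack_mul [Fintype k] [NonUnitalNonAssocSemiring R] (B : ι → Matrix m k R)
    (M : Matrix k l R) : stack B * M = stack fun c => B c * M :=
  rfl

lemma one_kronecker_mul_stack [Fintype ι] [Fintype m'] [DecidableEq ι] [Semiring R]
    (A : Matrix m m' R) (B : ι → Matrix m' k R) :
    ((1 : Matrix ι ι R) ⊗ₖ A) * stack B = stack fun c => A * B c := by
  ext ⟨c, i⟩ j
  simp only [mul_apply, Fintype.sum_prod_type, kroneckerMap_apply, one_apply, stack_apply, ite_mul,
    one_mul, zero_mul]
  rw [Finset.sum_comm]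
  simp

end Matrix

section

variable {C n : ℕ} [NeZero n]

lemma exp_eq_stdAddChar (p t : ZMod n) :
    Complex.exp (-2 * Real.pi * Complex.I * (p.val : ℂ) * (t.val : ℂ) / (n : ℂ)) =
      ZMod.stdAddChar (-(p * t)) := by
  have hcast : (-(p * t) : ZMod n) = ((-(p.val * t.val : ℕ) : ℤ) : ZMod n) := by
    push_cast
    simp [ZMod.natCast_val, ZMod.cast_id]
  rw [hcast, ZMod.stdAddChar_coe]
  congr 1
  push_cast
  ring

lemma conj_stdAddChar (a : ZMod n) :
    starRingEnd ℂ (ZMod.stdAddChar a) = ZMod.stdAddChar (-a) := by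
  rw [AddChar.map_neg_eq_inv, Complex.inv_eq_conj]
  exact Circle.norm_coe _

lemma dftCoeff_eq_dft (z : Fin C → ZMod n → ℂ) (p : ZMod n) (c : Fin C) :
    dftCoeff z p c = 𝓕 (z c) p := by
  refine Finset.sum_congr rfl fun t _ => ?_
  rw [exp_eq_stdAddChar, smul_eq_mul, mul_comm, mul_comm p]

lemma circulant_eq_conjTranspose_dftMatrix_mul (x : ZMod n → ℂ) :
    circulant x = (dftMatrix n)ᴴ * diagonal (𝓕 x) * dftMatrix n := by
  have hsqrt : ((Real.sqrt n : ℝ) : ℂ) ^ 2 = n := by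
    rw [← Complex.ofReal_pow, Real.sq_sqrt (Nat.cast_nonneg n), Complex.ofReal_natCast]
  ext i j
  have hinv : x (i - j) = 𝓕⁻ (𝓕 x) (i - j) := by simp
  rw [circulant_apply, hinv, ZMod.invDFT_apply, Finset.smul_sum, mul_apply]
  simp only [mul_diagonal, conjTranspose_apply, dftMatrix, of_apply, exp_eq_stdAddChar,
    Complex.star_def, map_div₀, conj_stdAddChar, Complex.conj_ofReal, neg_neg, smul_eq_mul]
  refine Finset.sum_congr rfl fun p _ => ?_
  have hchar : ZMod.stdAddChar (p * (i - j)) =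
      ZMod.stdAddChar (p * i) * ZMod.stdAddChar (-(p * j)) := by
    rw [← AddChar.map_add_eq_mul]
    ring_nf
  rw [hchar, ← hsqrt]
  field_simp

lemma dft_single_zero_one : 𝓕 (Pi.single 0 1 : ZMod n → ℂ) = 1 := by
  ext k
  simp [ZMod.dft_apply, Pi.single_apply]

-- `circ(δ₀) = 1` and `𝓕 δ₀ = 1`, so the diagonalisation of `circ(δ₀)` reads `1 = Fᴴ F`.
lemma dftMatrix_mul_conjTranspose : dftMatrix n * (dftMatrix n)ᴴ = 1 := by
  have h := circulant_eq_conjTranspose_dftMatrix_mul (Pi.single 0 1 : ZMod n → ℂ)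
  rw [circulant_single_one, dft_single_zero_one, diagonal_one', Matrix.mul_one] at h
  exact mul_eq_one_comm.mp h.symm

lemma permCF_mul_mul_conjTranspose (A : Matrix (ZMod n × Fin C) (ZMod n × Fin C) ℂ) :
    permCF C n * A * (permCF C n)ᴴ = A.submatrix Prod.swap Prod.swap := by
  ext ⟨c, i⟩ ⟨c', j⟩
  simp [permCF, mul_apply, Fintype.sum_prod_type, ite_and, apply_ite (starRingEnd ℂ), mul_ite]

noncomputable def dftDiagStack (z : Fin C → ZMod n → ℂ) : Matrix (Fin C × ZMod n) (ZMod n) ℂ :=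
  Matrix.stack fun c => diagonal (𝓕 (z c))

lemma circStack_eq_kronecker_mul_dftDiagStack_mul (z : Fin C → ZMod n → ℂ) :
    circStack z =
      ((1 : Matrix (Fin C) (Fin C) ℂ) ⊗ₖ (dftMatrix n)ᴴ) * dftDiagStack z * dftMatrix n := by
  rw [dftDiagStack, one_kronecker_mul_stack, stack_mul]
  simp_rw [← circulant_eq_conjTranspose_dftMatrix_mul]
  rfl

lemma dftDiagStack_mul_conjTranspose (z : Fin C → ZMod n → ℂ) :
    dftDiagStack z * (dftDiagStack z)ᴴ =
      (Matrix.of fun pc pc' : ZMod n × Fin C =>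
          if pc.1 = pc'.1 then
            dftCoeff z pc.1 pc.2 * (starRingEnd ℂ) (dftCoeff z pc'.1 pc'.2)
          else 0).submatrix Prod.swap Prod.swap := by
  ext ⟨c, p⟩ ⟨c', p'⟩
  by_cases hp : p = p' <;>
    simp [dftDiagStack, mul_apply, diagonal_apply, dftCoeff_eq_dft, hp, Ne.symm]

end

/-- Block diagonalization of the multi-channel circulant covariance:
`circ(z̄) circ(z̄)* = (I_C ⊗ Fₙ*) P D(z̄) P* (I_C ⊗ Fₙ)`, where the `p`-th `C × C`
diagonal block of `D(z̄)` is `v(p) v(p)*` for the vector `v(p)` of `p`-th DFT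
coefficients over the channels. -/
theorem multichannel_cov_block_diag {C n : ℕ} [NeZero n] (z : Fin C → ZMod n → ℂ) :
    circStack z * (circStack z)ᴴ =
      ((1 : Matrix (Fin C) (Fin C) ℂ) ⊗ₖ (dftMatrix n)ᴴ) * permCF C n *
        (Matrix.of fun pc pc' : ZMod n × Fin C =>
          if pc.1 = pc'.1 then
            dftCoeff z pc.1 pc.2 * (starRingEnd ℂ) (dftCoeff z pc'.1 pc'.2)
          else 0) *
        (permCF C n)ᴴ * ((1 : Matrix (Fin C) (Fin C) ℂ) ⊗ₖ dftMatrix n) := by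
  have hK : ((1 : Matrix (Fin C) (Fin C) ℂ) ⊗ₖ (dftMatrix n)ᴴ)ᴴ =
      (1 : Matrix (Fin C) (Fin C) ℂ) ⊗ₖ dftMatrix n := by
    rw [conjTranspose_kronecker, conjTranspose_one, conjTranspose_conjTranspose]
  rw [Matrix.mul_assoc _ (permCF C n), Matrix.mul_assoc _ (permCF C n * _),
    permCF_mul_mul_conjTranspose, ← dftDiagStack_mul_conjTranspose, ← hK,
    circStack_eq_kronecker_mul_dftDiagStack_mul, conjTranspose_mul, conjTranspose_mul]
  simp only [Matrix.mul_assoc]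
  rw [← Matrix.mul_assoc (dftMatrix n), dftMatrix_mul_conjTranspose, Matrix.one_mul]
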